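/- Let Γ be a finite simple graph and fix a cycle basis B of Γ. Two acyclic orientations O^1, O^2 of Γ are click-equivalent if and only if ν_C(O^1) = ν_C(O^2) for every cycle C in B. -/

import Mathlib

variable {V : Type*}

/-- An acyclic orientation of a simple graph `G`. -/
structure AcyclicOrientation (G : SimpleGraph V) where
  dir : V → V → Prop
  dir_adj : ∀ {a b : V}, dir a b → G.Adj a b
  total : ∀ {a b : V}, G.Adj a b → dir a b ∨ dir b a
  acyclic : ∀ a : V, ¬ Relation.TransGen dir a a

namespace AcyclicOrientation

variable {G : SimpleGraph V}

/-- `v` is a source: no edge points into `v`. -/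
def IsSource (O : AcyclicOrientation G) (v : V) : Prop := ∀ a, ¬ O.dir a v

/-- `O'` is obtained from `O` by converting the source `v` into a sink. -/
def ClickAt (O : AcyclicOrientation G) (v : V) (O' : AcyclicOrientation G) : Prop :=
  O.IsSource v ∧ ∀ a b, (O'.dir a b ↔ (((a = v ∨ b = v) ∧ O.dir b a) ∨ (a ≠ v ∧ b ≠ v ∧ O.dir a b)))

/-- One source-to-sink conversion relates `O` and `O'`. -/
def IsClick (O O' : AcyclicOrientation G) : Prop := ∃ v, O.ClickAt v O'

/-- Click-equivalence: reachability by a finite sequence of clicks. -/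
def ClickEquiv (O O' : AcyclicOrientation G) : Prop :=
  Relation.ReflTransGen IsClick O O'

/-- `ClickSeq O c O'` : the list `c` is a click-sequence applicable to `O` with result `O'`. -/
inductive ClickSeq : AcyclicOrientation G → List V → AcyclicOrientation G → Prop
  | nil (O : AcyclicOrientation G) : ClickSeq O [] O
  | cons {O O' O'' : AcyclicOrientation G} {v : V} {c : List V} :
      O.ClickAt v O' → ClickSeq O' c O'' → ClickSeq O (v :: c) O''

open scoped Classical in
/-- `ν_P(O)`: forward minus backward edges of the closed walk `p` under `O`. -/
noncomputable def nu (O : AcyclicOrientation G) {u : V} (p : G.Walk u u) : ℤ :=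
  (p.darts.map (fun d => if O.dir d.toProd.1 d.toProd.2 then (1 : ℤ) else -1)).sum

/-- The `vw`-interval: vertices on a directed path from `v` to `w`. -/
def interval (O : AcyclicOrientation G) (v w : V) : Set V :=
  {a | Relation.ReflTransGen O.dir v a ∧ Relation.ReflTransGen O.dir a w}

end AcyclicOrientation

open AcyclicOrientation

/-- The setoid of click-equivalence (equivalence relation generated by clicks). -/
def clickSetoid (G : SimpleGraph V) : Setoid (AcyclicOrientation G) :=
  ⟨Relation.EqvGen IsClick, Relation.EqvGen.is_equivalence _⟩

/-- `κ(G)`: the number of click-equivalence classes of acyclic orientations. -/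
noncomputable def kappa (G : SimpleGraph V) : ℕ :=
  Nat.card (Quotient (clickSetoid G))

/-- The graph obtained from `G` by contracting the vertex set `I` to the single vertex `vI ∈ I`
(vertices of `I` other than `vI` become isolated). -/
def contractGraph (G : SimpleGraph V) (I : Set V) (vI : V) : SimpleGraph V where
  Adj a b := a ≠ b ∧
    ((a ∉ I ∧ b ∉ I ∧ G.Adj a b) ∨
     (a = vI ∧ b ∉ I ∧ ∃ x ∈ I, G.Adj x b) ∨
     (b = vI ∧ a ∉ I ∧ ∃ x ∈ I, G.Adj x a))
  symm := by
    constructor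
    rintro a b ⟨hne, h⟩
    refine ⟨hne.symm, ?_⟩
    rcases h with ⟨ha, hb, hadj⟩ | ⟨ha, hb, x, hx, hadj⟩ | ⟨hb, ha, x, hx, hadj⟩
    · exact Or.inl ⟨hb, ha, hadj.symm⟩
    · exact Or.inr (Or.inr ⟨ha, hb, x, hx, hadj⟩)
    · exact Or.inr (Or.inl ⟨hb, ha, x, hx, hadj⟩)
  loopless := by constructor; rintro a ⟨hne, -⟩; exact hne rfl

/-- The orientation of the contracted graph induced by an orientation `O` of `G`. -/
def contractDir {G : SimpleGraph V} (O : AcyclicOrientation G) (I : Set V) (vI : V) :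
    V → V → Prop := fun a b =>
  (a ∉ I ∧ b ∉ I ∧ O.dir a b) ∨
  (a = vI ∧ b ∉ I ∧ ∃ x ∈ I, O.dir x b) ∨
  (b = vI ∧ a ∉ I ∧ ∃ x ∈ I, O.dir a x)

/-- The orientation `i → j` iff `i` precedes `j` in the list `l`. -/
def permDir (G : SimpleGraph V) [DecidableEq V] (l : List V) : V → V → Prop :=
  fun i j => G.Adj i j ∧ l.idxOf i < l.idxOf j
/-- The signed edge-incidence function of a closed walk. -/
def walkVec [DecidableEq V] (G : SimpleGraph V) {u : V} (p : G.Walk u u) : V → V → ℤ :=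
  fun a b => ((p.darts.filter (fun d => decide (d.toProd = (a, b)))).length : ℤ) -
    ((p.darts.filter (fun d => decide (d.toProd = (b, a)))).length : ℤ)

/-!
A click at `v` adds `2 [b = v] - 2 [a = v]` to the sign of every dart `(a, b)`; this telescopes
along a closed walk, so clicks preserve `ν`.

Conversely, `2 ν_C(O) = Σ walkVec C · sign O` is linear in the incidence vector of `C`, so
agreement on the basis gives agreement on all cycles, and then on all closed walks (cut a closed
walk into cycles and backtracks). Hence the difference of the sign functions of `O₁` and `O₂` is
the coboundary of an integer potential `φ`. On a component where `φ` is not constant, an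
`O₁`-minimal vertex among the minimisers of `φ` is a source of `O₁`; clicking it raises `φ`
there by `2` and keeps `φ` below its original maximum. After finitely many clicks `φ` is
constant along every edge, which means `O₁ = O₂`.
-/

theorem List.sum_map_eq_sum_univ_length_filter_nsmul {β α M : Type*} [Fintype α] [DecidableEq α]
    [AddCommMonoid M] (l : List β) (k : β → α) (g : α → M) :
    (l.map fun b => g (k b)).sum = ∑ x, (l.filter fun b => decide (k b = x)).length • g x := by
  induction l with
  | nil => simp
  | cons b l ih =>
    have (x : α) : ((b :: l).filter fun b => decide (k b = x)).length • g x =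
        (if k b = x then g x else 0) + (l.filter fun b => decide (k b = x)).length • g x := by
      by_cases h : k b = x <;> simp [h, add_smul, add_comm]
    simp [this, Finset.sum_add_distrib, ih]

namespace SimpleGraph.Walk

variable {G : SimpleGraph V} {A : Type*} [AddCommGroup A] {u v : V}

theorem sum_darts_sub (g : V → A) (p : G.Walk u v) :
    (p.darts.map fun d => g d.snd - g d.fst).sum = g v - g u := by
  induction p with
  | nil => simp
  | cons h p ih => simp [ih]

variable {f : G.Dart → A} (hf : ∀ d, f d.symm = -f d)
  (hcyc : ∀ (u : V) (c : G.Walk u u), c.IsCycle → (c.darts.map f).sum = 0)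
include hf

theorem sum_darts_reverse (p : G.Walk u v) :
    (p.reverse.darts.map f).sum = -(p.darts.map f).sum := by
  simp [darts_reverse, List.map_reverse, Function.comp_def, hf, List.sum_neg]

include hcyc

theorem sum_darts_cons_eq_zero_of_isPath {p : G.Walk v u} (hp : p.IsPath) (h : G.Adj u v) :
    ((cons h p).darts.map f).sum = 0 := by
  by_cases he : s(u, v) ∈ p.edges
  · rw [hp.eq_adj_toWalk_of_mem_edges (Sym2.eq_swap ▸ he)]
    simpa [add_eq_zero_iff_eq_neg'] using hf ⟨(u, v), h⟩
  · exact hcyc u _ ((cons_isCycle_iff p h).2 ⟨hp, he⟩)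

theorem sum_darts_bypass [DecidableEq V] (p : G.Walk u v) :
    (p.bypass.darts.map f).sum = (p.darts.map f).sum := by
  induction p with
  | nil => rfl
  | cons h p ih =>
    simp only [bypass]
    split_ifs with hs
    · have hzero := sum_darts_cons_eq_zero_of_isPath hf hcyc ((bypass_isPath p).takeUntil hs) h
      have hsplit := congrArg (fun q => (q.darts.map f).sum) (p.bypass.take_spec hs)
      simp only [darts_append, List.map_append, List.sum_append] at hsplit
      simp only [darts_cons, List.map_cons, List.sum_cons] at hzero ⊢
      rw [← ih, ← hsplit, ← add_assoc, hzero, zero_add]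
    · simp [ih]

theorem sum_darts_closed_eq_zero (p : G.Walk u u) : (p.darts.map f).sum = 0 := by
  classical
  rw [← sum_darts_bypass hf hcyc, (isPath_iff_nil.1 (bypass_isPath p)).eq_nil]
  rfl

end SimpleGraph.Walk

namespace SimpleGraph

open Walk

variable {G : SimpleGraph V} {A : Type*} [AddCommGroup A] {f : G.Dart → A}

theorem exists_potential_of_isCycle_sum_eq_zero (hf : ∀ d, f d.symm = -f d)
    (hcyc : ∀ (u : V) (c : G.Walk u u), c.IsCycle → (c.darts.map f).sum = 0) :
    ∃ φ : V → A, ∀ d : G.Dart, f d = φ d.snd - φ d.fst := by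
  have indep {x y : V} (p q : G.Walk x y) : (p.darts.map f).sum = (q.darts.map f).sum := by
    have := sum_darts_closed_eq_zero hf hcyc (p.append q.reverse)
    rw [darts_append, List.map_append, List.sum_append, sum_darts_reverse hf] at this
    exact sub_eq_zero.1 (by rwa [sub_eq_add_neg])
  let root (x : V) : V := Quot.out (G.connectedComponentMk x)
  have hroot (x : V) : G.Reachable (root x) x := ConnectedComponent.exact (Quot.out_eq _)
  refine ⟨fun x => ((hroot x).some.darts.map f).sum, fun d => ?_⟩
  have hr : root d.fst = root d.snd :=
    congrArg Quot.out (ConnectedComponent.sound d.adj.reachable)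
  show f d = ((hroot d.snd).some.darts.map f).sum - ((hroot d.fst).some.darts.map f).sum
  rw [← indep (((hroot d.fst).some.concat d.adj).copy hr rfl)]
  simp

end SimpleGraph

namespace AcyclicOrientation

variable {G : SimpleGraph V}

open scoped Classical in
noncomputable def sign (O : AcyclicOrientation G) (a b : V) : ℤ := if O.dir a b then 1 else -1

variable {O O' O₁ O₂ : AcyclicOrientation G} {a b u v : V}

theorem dir_asymm (h : O.dir a b) : ¬ O.dir b a :=
  fun h' => O.acyclic a (.head h (.single h'))

theorem sign_of_dir (h : O.dir a b) : O.sign a b = 1 := if_pos h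

theorem sign_of_not_dir (h : ¬ O.dir a b) : O.sign a b = -1 := if_neg h

theorem sign_eq_one_iff : O.sign a b = 1 ↔ O.dir a b := by
  by_cases h : O.dir a b <;> simp [sign, h]

theorem sign_eq_sign_of_iff (h : O₁.dir a b ↔ O₂.dir a b) :
    O₁.sign a b = O₂.sign a b := by
  by_cases hd : O₂.dir a b
  · rw [sign_of_dir hd, sign_of_dir (h.2 hd)]
  · rw [sign_of_not_dir hd, sign_of_not_dir (mt h.1 hd)]

theorem sign_eq_one_or_neg_one (O : AcyclicOrientation G) (a b : V) :
    O.sign a b = 1 ∨ O.sign a b = -1 := by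
  by_cases h : O.dir a b
  exacts [.inl (sign_of_dir h), .inr (sign_of_not_dir h)]

theorem sign_swap (hab : G.Adj a b) : O.sign b a = -O.sign a b := by
  rcases O.total hab with h | h
  · rw [sign_of_dir h, sign_of_not_dir (dir_asymm h)]
  · rw [sign_of_dir h, sign_of_not_dir (dir_asymm h), neg_neg]

theorem ext_of_sign (h : ∀ a b, G.Adj a b → O₁.sign a b = O₂.sign a b) : O₁ = O₂ := by
  have hdir : O₁.dir = O₂.dir := by
    ext a b
    constructor
    · intro hd
      rwa [← sign_eq_one_iff, ← h a b (O₁.dir_adj hd), sign_eq_one_iff]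
    · intro hd
      rwa [← sign_eq_one_iff, h a b (O₂.dir_adj hd), sign_eq_one_iff]
  cases O₁; cases O₂; cases hdir; rfl

theorem nu_eq_sum_sign (p : G.Walk u u) :
    nu O p = (p.darts.map fun d => O.sign d.fst d.snd).sum := rfl

theorem IsSource.dir_of_adj (hv : O.IsSource v) (h : G.Adj v b) : O.dir v b :=
  (O.total h).resolve_right (hv b)

theorem ClickAt.sign_eq [DecidableEq V] (hc : O.ClickAt v O') (hab : G.Adj a b) :
    O'.sign a b = O.sign a b + ((if b = v then 2 else 0) - (if a = v then 2 else 0)) := by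
  obtain ⟨hv, hiff⟩ := hc
  by_cases ha : a = v
  · subst ha
    have hb : b ≠ a := hab.ne.symm
    have : ¬ O'.dir a b := by
      rw [hiff]; rintro (⟨-, h⟩ | ⟨h, -⟩)
      exacts [hv b h, h rfl]
    rw [sign_of_not_dir this, sign_of_dir (hv.dir_of_adj hab)]
    simp [hb]
  by_cases hb : b = v
  · subst hb
    have hd := hv.dir_of_adj hab.symm
    rw [sign_of_dir ((hiff a b).2 (.inl ⟨.inr rfl, hd⟩)), sign_of_not_dir (dir_asymm hd)]
    simp [ha]
  · have : O'.dir a b ↔ O.dir a b := by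
      rw [hiff]; simp [ha, hb]
    simp [sign_eq_sign_of_iff this, ha, hb]

theorem two_mul_nu [Fintype V] [DecidableEq V] (O : AcyclicOrientation G) (p : G.Walk u u) :
    2 * nu O p = ∑ x : V × V, walkVec G p x.1 x.2 * O.sign x.1 x.2 := by
  have hfwd : nu O p = ∑ x : V × V,
      ((p.darts.filter fun d => decide (d.toProd = x)).length : ℤ) * O.sign x.1 x.2 := by
    simp only [nu_eq_sum_sign, ← nsmul_eq_mul]
    exact List.sum_map_eq_sum_univ_length_filter_nsmul p.darts (·.toProd) fun x => O.sign x.1 x.2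
  have hbwd : -nu O p = ∑ x : V × V,
      ((p.darts.filter fun d => decide (d.toProd = (x.2, x.1))).length : ℤ) * O.sign x.1 x.2 := by
    have : -nu O p = (p.darts.map fun d => O.sign d.snd d.fst).sum := by
      rw [nu_eq_sum_sign, List.sum_neg, List.map_map]
      exact congrArg _ (List.map_congr_left fun d _ => (sign_swap d.adj).symm)
    rw [this, List.sum_map_eq_sum_univ_length_filter_nsmul p.darts (·.toProd)
      fun x => O.sign x.2 x.1, ← (Equiv.prodComm V V).sum_comp]
    rfl
  simp only [walkVec, sub_mul, Finset.sum_sub_distrib, ← hfwd, ← hbwd]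
  ring

theorem nu_eq_sum_of_walkVec_eq_sum [Fintype V] [DecidableEq V] {ι : Type*} [Fintype ι]
    (O : AcyclicOrientation G) {p : G.Walk u u} (c : ι → (v : V) × G.Walk v v)
    (coef : ι → ℤ)
    (h : ∀ a b, walkVec G p a b = ∑ i, coef i * walkVec G (c i).2 a b) :
    nu O p = ∑ i, coef i * nu O (c i).2 := by
  have : 2 * nu O p = 2 * ∑ i, coef i * nu O (c i).2 := by
    simp_rw [two_mul_nu, h, Finset.mul_sum, mul_left_comm (2 : ℤ), two_mul_nu, Finset.mul_sum,
      Finset.sum_mul, mul_assoc]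
    exact Finset.sum_comm
  exact mul_left_cancel₀ two_ne_zero this

theorem nu_eq_of_clickAt (h : O.ClickAt v O') (p : G.Walk u u) : nu O' p = nu O p := by
  classical
  rw [nu_eq_sum_sign, nu_eq_sum_sign, List.map_congr_left fun d _ => h.sign_eq d.adj,
    List.sum_map_add, SimpleGraph.Walk.sum_darts_sub (fun x => if x = v then (2 : ℤ) else 0) p,
    sub_self, add_zero]

theorem nu_eq_of_clickEquiv (h : ClickEquiv O O') (p : G.Walk u u) : nu O p = nu O' p := by
  induction h with
  | refl => rfl
  | tail _ hc ih =>
    obtain ⟨v, hv⟩ := hc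
    rw [ih, nu_eq_of_clickAt hv]

def click (O : AcyclicOrientation G) (v : V) (hv : O.IsSource v) : AcyclicOrientation G where
  dir a b := ((a = v ∨ b = v) ∧ O.dir b a) ∨ (a ≠ v ∧ b ≠ v ∧ O.dir a b)
  dir_adj := by
    rintro a b (⟨-, h⟩ | ⟨-, -, h⟩)
    exacts [(O.dir_adj h).symm, O.dir_adj h]
  total := by
    intro a b hab
    by_cases ha : a = v
    · subst ha
      exact .inr (.inl ⟨.inr rfl, hv.dir_of_adj hab⟩)
    by_cases hb : b = v
    · subst hb
      exact .inl (.inl ⟨.inr rfl, hv.dir_of_adj hab.symm⟩)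
    rcases O.total hab with h | h
    exacts [.inl (.inr ⟨ha, hb, h⟩), .inr (.inr ⟨hb, ha, h⟩)]
  acyclic := by
    set dir' : V → V → Prop :=
      fun a b => ((a = v ∨ b = v) ∧ O.dir b a) ∨ (a ≠ v ∧ b ≠ v ∧ O.dir a b)
    -- `v` is a sink of the new orientation, and every other new edge is an old one.
    have not_from_v (b : V) : ¬ dir' v b := by
      rintro (⟨-, h⟩ | ⟨h, -⟩)
      exacts [hv b h, h rfl]
    have step {a b : V} (h : dir' a b) : b = v ∨ O.dir a b := by
      rcases h with ⟨rfl | rfl, h⟩ | ⟨-, -, h⟩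
      exacts [absurd h (hv b), .inl rfl, .inr h]
    have chain {a b : V} (h : Relation.TransGen dir' a b) :
        b = v ∨ Relation.TransGen O.dir a b := by
      induction h with
      | single h => exact (step h).imp_right .single
      | tail h₁ h₂ ih =>
        rcases ih with rfl | ih
        · exact absurd h₂ (not_from_v _)
        · exact (step h₂).imp_right ih.tail
    intro a h
    rcases chain h with rfl | h'
    · obtain ⟨c, hc, -⟩ := Relation.TransGen.head'_iff.mp h
      exact not_from_v c hc
    · exact O.acyclic a h'

theorem clickAt_click (O : AcyclicOrientation G) (v : V) (hv : O.IsSource v) :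
    O.ClickAt v (O.click v hv) :=
  ⟨hv, fun _ _ => Iff.rfl⟩

theorem exists_not_dir_of_mem [Finite V] (O : AcyclicOrientation G) {s : Set V} (hs : s.Nonempty) :
    ∃ v ∈ s, ∀ a ∈ s, ¬ O.dir a v := by
  have : IsTrans V (Relation.TransGen O.dir) := ⟨fun _ _ _ => .trans⟩
  have : Std.Irrefl (Relation.TransGen O.dir) := ⟨O.acyclic⟩
  obtain ⟨v, hv, hmin⟩ :=
    (Finite.wellFounded_of_trans_of_irrefl (Relation.TransGen O.dir)).has_min s hs
  exact ⟨v, hv, fun a ha h => hmin a ha (.single h)⟩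

variable {φ : V → ℤ}

def IsPotential (O₁ O₂ : AcyclicOrientation G) (φ : V → ℤ) : Prop :=
  ∀ ⦃a b⦄, G.Adj a b → φ b - φ a = O₁.sign a b - O₂.sign a b

theorem exists_isPotential (h : ∀ (u : V) (c : G.Walk u u), c.IsCycle → nu O₁ c = nu O₂ c) :
    ∃ φ, IsPotential O₁ O₂ φ := by
  obtain ⟨φ, hφ⟩ := SimpleGraph.exists_potential_of_isCycle_sum_eq_zero (G := G)
    (f := fun d => O₁.sign d.fst d.snd - O₂.sign d.fst d.snd)
    (fun d => by simp [sign_swap d.adj]; ring)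
    (fun u c hc => by
      simpa [sub_eq_add_neg, List.sum_map_add, List.sum_neg, Function.comp_def, nu_eq_sum_sign]
        using sub_eq_zero.2 (h u c hc))
  exact ⟨φ, fun a b hab => (hφ ⟨(a, b), hab⟩).symm⟩

theorem IsPotential.eq_of_forall_adj (hφ : IsPotential O₁ O₂ φ)
    (h : ∀ a b, G.Adj a b → φ a = φ b) : O₁ = O₂ :=
  ext_of_sign fun a b hab => by linarith [hφ hab, h a b hab]

theorem IsPotential.clickAt [DecidableEq V] (hφ : IsPotential O₁ O₂ φ)
    (hc : O₁.ClickAt v O') :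
    IsPotential O' O₂ fun x => φ x + if x = v then 2 else 0 := fun a b hab => by
  rw [hc.sign_eq hab]
  linear_combination hφ hab

theorem IsPotential.exists_isSource [Finite V] (hφ : IsPotential O₁ O₂ φ) (hab : G.Adj a b)
    (hne : φ a ≠ φ b) : ∃ v, O₁.IsSource v ∧ φ v + 2 ≤ max (φ a) (φ b) := by
  obtain ⟨m, hm, hmin⟩ := Set.exists_min_image {x | G.Reachable a x} φ (Set.toFinite _)
    ⟨a, .refl a⟩
  obtain ⟨v, ⟨hva, hvm⟩, hv⟩ := O₁.exists_not_dir_of_mem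
    (s := {x | G.Reachable a x ∧ φ x = φ m}) ⟨m, hm, rfl⟩
  refine ⟨v, fun c hc => ?_, ?_⟩
  · have hca : G.Reachable a c := hva.trans (O₁.dir_adj hc).symm.reachable
    have hcv := hφ (O₁.dir_adj hc)
    rw [sign_of_dir hc] at hcv
    refine hv c ⟨hca, le_antisymm ?_ (hmin c hca)⟩ hc
    rcases O₂.sign_eq_one_or_neg_one c v with h | h <;> rw [h] at hcv <;> omega
  · have := hφ hab
    have := hmin a (.refl a)
    have := hmin b hab.reachable
    rcases O₁.sign_eq_one_or_neg_one a b with h₁ | h₁ <;>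
      rcases O₂.sign_eq_one_or_neg_one a b with h₂ | h₂ <;> omega

theorem IsPotential.clickEquiv [Fintype V] [DecidableEq V] {O₁ O₂ : AcyclicOrientation G}
    {φ : V → ℤ} {C : ℤ} (hφ : IsPotential O₁ O₂ φ) (hC : ∀ x, φ x ≤ C) :
    ClickEquiv O₁ O₂ := by
  by_cases hconst : ∀ a b, G.Adj a b → φ a = φ b
  · rw [hφ.eq_of_forall_adj hconst]
    exact .refl
  push Not at hconst
  obtain ⟨a, b, hab, hne⟩ := hconst
  obtain ⟨v, hv, hvC⟩ := hφ.exists_isSource hab hne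
  have hC' (x : V) : φ x + (if x = v then 2 else 0) ≤ C := by
    split_ifs with hx
    · subst hx
      exact hvC.trans (max_le (hC a) (hC b))
    · simpa using hC x
  have hdecr : ∑ x, (C - (φ x + if x = v then 2 else 0)) + 2 = ∑ x, (C - φ x) := by
    simp [sub_add_eq_sub_sub, Finset.sum_sub_distrib]
  have hnonneg : 0 ≤ ∑ x, (C - (φ x + if x = v then 2 else 0)) :=
    Finset.sum_nonneg fun x _ => sub_nonneg.2 (hC' x)
  have hclick := clickAt_click O₁ v hv
  exact .head ⟨v, hclick⟩ ((hφ.clickAt hclick).clickEquiv hC')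
termination_by (∑ x, (C - φ x)).toNat
decreasing_by omega

end AcyclicOrientation

open AcyclicOrientation in
theorem clickEquiv_iff_nu_eq_on_basis_general [Fintype V] [DecidableEq V] (G : SimpleGraph V)
    (B : List ((u : V) × G.Walk u u))
    (hBspan : ∀ (u : V) (p : G.Walk u u), p.IsCycle →
      ∃ coef : Fin B.length → ℤ, ∀ a b : V,
        walkVec G p a b = ∑ i : Fin B.length, coef i * walkVec G (B.get i).2 a b)
    (O₁ O₂ : AcyclicOrientation G) :
    ClickEquiv O₁ O₂ ↔ ∀ pb ∈ B, nu O₁ pb.2 = nu O₂ pb.2 := by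
  refine ⟨fun h pb _ => nu_eq_of_clickEquiv h pb.2, fun hB => ?_⟩
  have hcyc (u : V) (c : G.Walk u u) (hc : c.IsCycle) : nu O₁ c = nu O₂ c := by
    obtain ⟨coef, hcoef⟩ := hBspan u c hc
    simp only [nu_eq_sum_of_walkVec_eq_sum _ _ coef hcoef, hB _ (B.get_mem _)]
  obtain ⟨φ, hφ⟩ := exists_isPotential hcyc
  obtain ⟨C, hC⟩ := Finite.bddAbove_range φ
  exact hφ.clickEquiv fun x => hC ⟨x, rfl⟩

/-- With respect to a fixed cycle basis `B`, two acyclic orientations are click-equivalent iff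
`ν_C` agrees on every basis cycle `C`. -/
theorem clickEquiv_iff_nu_eq_on_basis [Fintype V] [DecidableEq V] (G : SimpleGraph V)
    (B : List ((u : V) × G.Walk u u))
    (hBcyc : ∀ pb ∈ B, pb.2.IsCycle)
    (hBspan : ∀ (u : V) (p : G.Walk u u), p.IsCycle →
      ∃ coef : Fin B.length → ℤ, ∀ a b : V,
        walkVec G p a b = ∑ i : Fin B.length, coef i * walkVec G (B.get i).2 a b)
    (O₁ O₂ : AcyclicOrientation G) :
    ClickEquiv O₁ O₂ ↔ ∀ pb ∈ B, nu O₁ pb.2 = nu O₂ pb.2 :=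
  clickEquiv_iff_nu_eq_on_basis_general G B hBspan O₁ O₂
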